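/- Let B be a Banach A-bimodule, let n ≥ 0 be an even integer, and let D: A^(n) → B^(n+1) be a bounded derivation of the Banach algebra A^(n) into the Banach A^(n)-bimodule B^(n+1). If Z̃ℓ_{A^(n+2)}(B^(n+2)) = B^(n+2), i.e., for every b^(n+2) ∈ B^(n+2) the map a^(n+2) ↦ b^(n+2)a^(n+2) from A^(n+2) into B^(n+2) is weak*-to-weak continuous, then the second adjoint D'': A^(n+2) → B^(n+3) is again a derivation (with respect to the first Arens product on A^(n+2) and the induced A^(n+2)-bimodule structure on B^(n+3)). -/

import Mathlib

open NormedSpace Filter Topology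

noncomputable section

universe u

/-- The Arens adjoint of a bounded bilinear map `m : X × Y → Z`:
`⟨adjB m z' x, y⟩ = ⟨z', m x y⟩`.  Its triple iterate `adjB (adjB (adjB m))` is the Arens
(triple adjoint) extension `m*** : X** × Y** → Z**`. -/
def adjB {X Y Z : Type*} [NormedAddCommGroup X] [NormedSpace ℂ X]
    [NormedAddCommGroup Y] [NormedSpace ℂ Y] [NormedAddCommGroup Z] [NormedSpace ℂ Z]
    (m : X →L[ℂ] Y →L[ℂ] Z) : StrongDual ℂ Z →L[ℂ] X →L[ℂ] StrongDual ℂ Y :=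
  ((ContinuousLinearMap.compL ℂ X (Y →L[ℂ] Z) (Y →L[ℂ] ℂ)).flip m).comp
    (ContinuousLinearMap.compL ℂ Y Z ℂ)

/-- A pair consisting of a Banach algebra (carrier `X`, multiplication `mul`) and a Banach
`X`-bimodule (carrier `Y`, left action `pl`, right action `pr`), recorded through its bounded
(bi)linear structure maps. -/
structure APair : Type (u + 1) where
  X : Type u
  Y : Type u
  [nX : NormedAddCommGroup X]
  [mX : NormedSpace ℂ X]
  [nY : NormedAddCommGroup Y]
  [mY : NormedSpace ℂ Y]
  mul : X →L[ℂ] X →L[ℂ] X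
  pl : X →L[ℂ] Y →L[ℂ] Y
  pr : Y →L[ℂ] X →L[ℂ] Y

attribute [instance] APair.nX APair.mX APair.nY APair.mY

/-- Passage to biduals: `X ↦ X**`, `Y ↦ Y**`, with the first Arens product on `X**` and the
Arens triple-adjoint extensions of the module actions. -/
def APair.bidual (P : APair) : APair where
  X := StrongDual ℂ (StrongDual ℂ P.X)
  Y := StrongDual ℂ (StrongDual ℂ P.Y)
  mul := adjB (adjB (adjB P.mul))
  pl := adjB (adjB (adjB P.pl))
  pr := adjB (adjB (adjB P.pr))

/-- `P.iter k` is the `2k`-th dual level of the pair `P`: the Banach algebra `A^(2k)` acting on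
the Banach bimodule `B^(2k)`. -/
def APair.iter (P : APair) : ℕ → APair
  | 0 => P
  | k + 1 => (P.iter k).bidual

variable (A B : Type u) [NonUnitalNormedRing A] [NormedSpace ℂ A]
  [SMulCommClass ℂ A A] [IsScalarTower ℂ A A] [CompleteSpace A]
  [NormedAddCommGroup B] [NormedSpace ℂ B] [CompleteSpace B]

variable (πl : A →L[ℂ] B →L[ℂ] B) (πr : B →L[ℂ] A →L[ℂ] B)

/-- The base pair: the Banach algebra `A` together with the Banach `A`-bimodule `B`. -/
def basePair : APair where
  X := A
  Y := B
  mul := ContinuousLinearMap.mul ℂ A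
  pl := πl
  pr := πr

/-- The Banach-space adjoint (transpose) of a bounded linear map: `dualCLM f g = g ∘ f`. -/
def dualCLM {E F : Type*} [NormedAddCommGroup E] [NormedSpace ℂ E]
    [NormedAddCommGroup F] [NormedSpace ℂ F] (f : E →L[ℂ] F) :
    StrongDual ℂ F →L[ℂ] StrongDual ℂ E :=
  (ContinuousLinearMap.compL ℂ E F ℂ).flip f

/-- `D : X → Y*` is a derivation of the Banach algebra `P.X` into the dual bimodule `(P.Y)*`,
whose actions are `⟨b'·a, b⟩ = ⟨b', ab⟩` and `⟨a·b', b⟩ = ⟨b', ba⟩`: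
`D(xy) = x·D(y) + D(x)·y`. -/
def IsDerivationDual (P : APair) (D : P.X →L[ℂ] StrongDual ℂ P.Y) : Prop :=
  ∀ x y : P.X, D (P.mul x y) = (D y).comp (P.pr.flip x) + (D x).comp (P.pl y)

/-!
Fix `G ∈ A^(n+2)` and `b ∈ B^(n+2)`. Both sides of the derivation identity for `D''` at `(F, G)`,
evaluated at `b`, are bounded linear functionals of `F ∈ A^(n+2)`, and they are weak*-continuous:
the terms of the form `⟨F, ·⟩` trivially, and `F ↦ ⟨G, D'(b F)⟩` because `F ↦ b F` is
weak*-to-weak continuous. A weak*-continuous functional on a bidual is evaluation at a point of the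
dual, so it is determined by its values on `A^(n)`, where the identity is the derivation property
of `D`.
-/

section WeakStar

variable {𝕜 : Type*} [NontriviallyNormedField 𝕜]

theorem WeakDual.exists_eq_eval {V : Type*} [AddCommGroup V] [TopologicalSpace V] [Module 𝕜 V]
    (φ : StrongDual 𝕜 (WeakDual 𝕜 V)) : ∃ v : V, ∀ F : WeakDual 𝕜 V, φ F = F v := by
  obtain ⟨v, hv⟩ := LinearMap.dualEmbedding_surjective (topDualPairing 𝕜 V) φ
  exact ⟨v, fun F => (DFunLike.congr_fun hv F).symm⟩

theorem StrongDual.exists_eq_eval_of_continuous_weakDual {W : Type*} [NormedAddCommGroup W]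
    [NormedSpace 𝕜 W] (Φ : StrongDual 𝕜 (StrongDual 𝕜 W))
    (hΦ : Continuous fun F : WeakDual 𝕜 W => Φ F) : ∃ w : W, ∀ F, Φ F = F w :=
  WeakDual.exists_eq_eval ⟨Φ.toLinearMap ∘ₗ WeakDual.toStrongDual.toLinearMap, hΦ⟩

theorem StrongDual.ext_inclusionInDoubleDual_of_continuous_weakDual {E : Type*}
    [NormedAddCommGroup E] [NormedSpace 𝕜 E] {Φ Ψ : StrongDual 𝕜 (StrongDual 𝕜 (StrongDual 𝕜 E))}
    (hΦ : Continuous fun F : WeakDual 𝕜 (StrongDual 𝕜 E) => Φ F)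
    (hΨ : Continuous fun F : WeakDual 𝕜 (StrongDual 𝕜 E) => Ψ F)
    (h : ∀ x : E, Φ (inclusionInDoubleDual 𝕜 E x) = Ψ (inclusionInDoubleDual 𝕜 E x)) :
    Φ = Ψ := by
  obtain ⟨f, hf⟩ := exists_eq_eval_of_continuous_weakDual Φ hΦ
  obtain ⟨g, hg⟩ := exists_eq_eval_of_continuous_weakDual Ψ hΨ
  have hfg : f = g := ContinuousLinearMap.ext fun x => by
    simpa only [hf, hg, dual_def] using h x
  exact ContinuousLinearMap.ext fun F => by rw [hf, hg, hfg]

end WeakStar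

theorem adjB_adjB_inclusionInDoubleDual {X Y Z : Type*} [NormedAddCommGroup X] [NormedSpace ℂ X]
    [NormedAddCommGroup Y] [NormedSpace ℂ Y] [NormedAddCommGroup Z] [NormedSpace ℂ Z]
    (m : X →L[ℂ] Y →L[ℂ] Z) (y : Y) (z' : StrongDual ℂ Z) :
    adjB (adjB m) (inclusionInDoubleDual ℂ Y y) z' = z'.comp (m.flip y) :=
  rfl

theorem IsDerivationDual.bidual {P : APair} {D : P.X →L[ℂ] StrongDual ℂ P.Y}
    (hD : IsDerivationDual P D)
    (hz : ∀ b2 : StrongDual ℂ (StrongDual ℂ P.Y),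
      Continuous fun a2 : WeakDual ℂ (StrongDual ℂ P.X) =>
        toWeakSpace ℂ _ (adjB (adjB (adjB P.pr)) b2 a2)) :
    IsDerivationDual P.bidual (dualCLM (dualCLM D)) := by
  refine fun (F G : StrongDual ℂ (StrongDual ℂ P.X)) => ?_
  refine ContinuousLinearMap.ext fun (b2 : StrongDual ℂ (StrongDual ℂ P.Y)) => ?_
  let Φ : StrongDual ℂ (StrongDual ℂ (StrongDual ℂ P.X)) :=
    inclusionInDoubleDual ℂ _ (adjB (adjB P.mul) G (dualCLM D b2))
  let Ψ : StrongDual ℂ (StrongDual ℂ (StrongDual ℂ P.X)) :=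
    (G.comp (dualCLM D)).comp (adjB (adjB (adjB P.pr)) b2) +
      inclusionInDoubleDual ℂ _ (dualCLM D (adjB (adjB (adjB P.pl)) G b2))
  suffices Φ = Ψ from DFunLike.congr_fun this F
  refine StrongDual.ext_inclusionInDoubleDual_of_continuous_weakDual
    (WeakDual.eval_continuous _) ?_ fun a => ?_
  · exact ((WeakBilin.eval_continuous _ (G.comp (dualCLM D))).comp (hz b2)).add
      (WeakDual.eval_continuous _)
  · -- At `a ∈ X` all three terms are `G` applied to functionals on `X`, which agree by `hD a`.
    show G _ = G _ + G _
    rw [← map_add]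
    congr 1
    ext b
    show b2 (D (P.mul a b)) = b2 (adjB (adjB P.pr) (inclusionInDoubleDual ℂ _ a) (D b)) +
      b2 ((D a).comp (P.pl b))
    rw [adjB_adjB_inclusionInDoubleDual, ← map_add, hD]

theorem stmt19
    (j : ℕ)
    (D : ((basePair A B πl πr).iter j).X →L[ℂ] StrongDual ℂ ((basePair A B πl πr).iter j).Y)
    (hD : IsDerivationDual ((basePair A B πl πr).iter j) D)
    (hz : ∀ b2 : StrongDual ℂ (StrongDual ℂ ((basePair A B πl πr).iter j).Y),
      Continuous fun a2 : WeakDual ℂ (StrongDual ℂ ((basePair A B πl πr).iter j).X) =>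
        (adjB (adjB (adjB ((basePair A B πl πr).iter j).pr)) b2 a2 :
          WeakSpace ℂ (StrongDual ℂ (StrongDual ℂ ((basePair A B πl πr).iter j).Y)))) :
    IsDerivationDual ((basePair A B πl πr).iter j).bidual (dualCLM (dualCLM D)) :=
  hD.bidual fun b2 => (toWeakSpaceCLM ℂ _).continuous.comp (hz b2)

end
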